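/- Let b₁,b₂,b₃,b₄ be real numbers with b₁ > 0, b₃ > 0, 4b₄b₂ − b₃² > 0, and 3b₁b₃ − b₂² > 0. Then 27b₁²b₄² − 18b₁b₂b₃b₄ + 4b₁b₃³ + 4b₂³b₄ − b₂²b₃² ≥ 0; indeed, viewed as a quadratic in b₄ it has discriminant −16(3b₁b₃ − b₂²)³ < 0 and positive leading coefficient, so it is strictly positive. Consequently the 4×4 symmetric matrix B = [[b₁,b₂,b₃,b₄],[b₂,3b₃,9b₄,(4b₄b₂−b₃²)/b₁],[b₃,9b₄,3(4b₄b₂−b₃²)/b₁,−(2b₁b₃b₄−4b₂²b₄+b₂b₃²)/b₁²],[b₄,(4b₄b₂−b₃²)/b₁,−(2b₁b₃b₄−4b₂²b₄+b₂b₃²)/b₁²,−(8b₁b₄²−4b₂b₃b₄+b₃³)/b₁²]] is not positive definite. -/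

import Mathlib

/-!
The displayed quantity is minus the discriminant of the cubic `b₁x³ + b₂x² + b₃x + b₄`, which is
negative as soon as `b₂² < 3b₁b₃`, i.e. as soon as the derivative of the cubic has no real root.
The leading `3 × 3` principal minor of `B` has determinant `3 · discr / b₁ < 0`, so `B` is not
positive definite.
-/

open Matrix

theorem Cubic.discr_neg_of_b_sq_lt {R : Type*} [CommRing R] [LinearOrder R]
    [IsStrictOrderedRing R] (P : Cubic R) (h : P.b ^ 2 < 3 * P.a * P.c) : P.discr < 0 := by
  have key : 108 * P.a ^ 2 * -P.discr =
      (54 * P.a ^ 2 * P.d - 18 * P.a * P.b * P.c + 4 * P.b ^ 3) ^ 2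
        + 16 * (3 * P.a * P.c - P.b ^ 2) ^ 3 := by
    rw [Cubic.discr]; ring
  have hpos : 0 < 108 * P.a ^ 2 * -P.discr := by
    have := sub_pos.2 h
    rw [key]; positivity
  exact neg_pos.1 (pos_of_mul_pos_right hpos (by positivity))

theorem det_L76_leadingMinor {K : Type*} [Field K] (b₁ b₂ b₃ b₄ : K) (hb₁ : b₁ ≠ 0) :
    !![b₁, b₂, b₃; b₂, 3 * b₃, 9 * b₄; b₃, 9 * b₄, 3 * ((4 * b₄ * b₂ - b₃ ^ 2) / b₁)].det
      = 3 * (Cubic.mk b₁ b₂ b₃ b₄).discr / b₁ := by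
  rw [det_fin_three, Cubic.discr]
  simp only [of_apply, cons_val', cons_val_zero, cons_val_one, cons_val_two, empty_val',
    cons_val_fin_one, head_cons, tail_cons, head_fin_const]
  field_simp
  ring

theorem L76_key_matrix_not_posDef_general (b₁ b₂ b₃ b₄ : ℝ)
    (h1 : 0 < b₁)
    (h22 : 0 < 3 * b₁ * b₃ - b₂ ^ 2) :
    0 < 27 * b₁ ^ 2 * b₄ ^ 2 - 18 * b₁ * b₂ * b₃ * b₄ + 4 * b₁ * b₃ ^ 3
        + 4 * b₂ ^ 3 * b₄ - b₂ ^ 2 * b₃ ^ 2 ∧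
    ¬ (!![b₁, b₂, b₃, b₄;
          b₂, 3 * b₃, 9 * b₄, (4 * b₄ * b₂ - b₃ ^ 2) / b₁;
          b₃, 9 * b₄, 3 * ((4 * b₄ * b₂ - b₃ ^ 2) / b₁),
            -((2 * b₁ * b₃ * b₄ - 4 * b₂ ^ 2 * b₄ + b₂ * b₃ ^ 2) / b₁ ^ 2);
          b₄, (4 * b₄ * b₂ - b₃ ^ 2) / b₁,
            -((2 * b₁ * b₃ * b₄ - 4 * b₂ ^ 2 * b₄ + b₂ * b₃ ^ 2) / b₁ ^ 2),
            -((8 * b₁ * b₄ ^ 2 - 4 * b₂ * b₃ * b₄ + b₃ ^ 3) / b₁ ^ 2)] :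
        Matrix (Fin 4) (Fin 4) ℝ).PosDef := by
  have hdiscr := Cubic.discr_neg_of_b_sq_lt ⟨b₁, b₂, b₃, b₄⟩ (sub_pos.1 h22)
  refine ⟨by rw [Cubic.discr] at hdiscr; linarith, fun hB => ?_⟩
  have hminor := (hB.submatrix (Fin.castSucc_injective 3)).det_pos
  rw [show submatrix _ Fin.castSucc Fin.castSucc = !![b₁, b₂, b₃; b₂, 3 * b₃, 9 * b₄;
      b₃, 9 * b₄, 3 * ((4 * b₄ * b₂ - b₃ ^ 2) / b₁)] by ext i j; fin_cases i <;> fin_cases j <;> rfl,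
    det_L76_leadingMinor _ _ _ _ h1.ne'] at hminor
  exact (div_neg_of_neg_of_pos (mul_neg_of_pos_of_neg three_pos hdiscr) h1).not_gt hminor

/-- The key algebraic lemma in the proof that `L₇,₆` admits no closed G₂-structure.
If `b₁ > 0`, `b₃ > 0`, `4b₄b₂ − b₃² > 0` and `3b₁b₃ − b₂² > 0`, then the quantity
`27b₁²b₄² − 18b₁b₂b₃b₄ + 4b₁b₃³ + 4b₂³b₄ − b₂²b₃²` is strictly positive (as a quadratic
in `b₄` it has negative discriminant `−16(3b₁b₃ − b₂²)³` and positive leading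
coefficient), and consequently the displayed 4×4 symmetric matrix `B` is not positive
definite. -/
theorem L76_key_matrix_not_posDef (b₁ b₂ b₃ b₄ : ℝ)
    (h1 : 0 < b₁) (h3 : 0 < b₃) (h43 : 0 < 4 * b₄ * b₂ - b₃ ^ 2)
    (h22 : 0 < 3 * b₁ * b₃ - b₂ ^ 2) :
    0 < 27 * b₁ ^ 2 * b₄ ^ 2 - 18 * b₁ * b₂ * b₃ * b₄ + 4 * b₁ * b₃ ^ 3
        + 4 * b₂ ^ 3 * b₄ - b₂ ^ 2 * b₃ ^ 2 ∧
    ¬ (!![b₁, b₂, b₃, b₄;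
          b₂, 3 * b₃, 9 * b₄, (4 * b₄ * b₂ - b₃ ^ 2) / b₁;
          b₃, 9 * b₄, 3 * ((4 * b₄ * b₂ - b₃ ^ 2) / b₁),
            -((2 * b₁ * b₃ * b₄ - 4 * b₂ ^ 2 * b₄ + b₂ * b₃ ^ 2) / b₁ ^ 2);
          b₄, (4 * b₄ * b₂ - b₃ ^ 2) / b₁,
            -((2 * b₁ * b₃ * b₄ - 4 * b₂ ^ 2 * b₄ + b₂ * b₃ ^ 2) / b₁ ^ 2),
            -((8 * b₁ * b₄ ^ 2 - 4 * b₂ * b₃ * b₄ + b₃ ^ 3) / b₁ ^ 2)] :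
        Matrix (Fin 4) (Fin 4) ℝ).PosDef :=
  L76_key_matrix_not_posDef_general b₁ b₂ b₃ b₄ h1 h22
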